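/- Let q ∈ (1,∞), let x be block k-sparse with block support S, and let h ∈ ker(A) be nonzero. If ‖h‖_{2,1}/‖h‖_{2,q} > 3 k^{1−1/q}, then ‖x+h‖_{2,1}/‖x+h‖_{2,q} > ‖x‖_{2,1}/‖x‖_{2,q}. -/

import Mathlib

noncomputable section

/-- The mixed ℓ2/ℓ1 norm of a block-partitioned vector. -/
def norm21 {M d : ℕ} (z : Fin M → EuclideanSpace ℝ (Fin d)) : ℝ := ∑ j, ‖z j‖

/-- The mixed ℓ2/ℓq norm of a block-partitioned vector. -/
def norm2q {M d : ℕ} (q : ℝ) (z : Fin M → EuclideanSpace ℝ (Fin d)) : ℝ :=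
  (∑ j, ‖z j‖ ^ q) ^ (1 / q)

/-- The mixed ℓ2/ℓ∞ norm of a block-partitioned vector. -/
def norm2inf {M d : ℕ} (z : Fin M → EuclideanSpace ℝ (Fin d)) : ℝ := ⨆ j, ‖z j‖

/-- The block q-ratio sparsity. -/
def kqs {M d : ℕ} (q : ℝ) (z : Fin M → EuclideanSpace ℝ (Fin d)) : ℝ :=
  (norm21 z / norm2q q z) ^ (q / (q - 1))

/-- The block support of a block-partitioned vector. -/
def blockSupport {M d : ℕ} (z : Fin M → EuclideanSpace ℝ (Fin d)) : Finset (Fin M) :=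
  letI := Classical.decPred fun j : Fin M => z j ≠ 0
  Finset.univ.filter fun j => z j ≠ 0

/-- Restriction of a block-partitioned vector to a set of blocks. -/
def restrictS {M d : ℕ} (S : Finset (Fin M)) (z : Fin M → EuclideanSpace ℝ (Fin d)) :
    Fin M → EuclideanSpace ℝ (Fin d) := fun j => if j ∈ S then z j else 0

/-- Matrix action on a block-partitioned vector. -/
def mulB {m M d : ℕ} (A : Matrix (Fin m) (Fin M × Fin d) ℝ)
    (x : Fin M → EuclideanSpace ℝ (Fin d)) : EuclideanSpace ℝ (Fin m) :=
  WithLp.toLp 2 (fun i => ∑ p : Fin M × Fin d, A i p * x p.1 p.2)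

/-- Transpose matrix action, producing a block-partitioned vector. -/
def mulBt {m M d : ℕ} (A : Matrix (Fin m) (Fin M × Fin d) ℝ)
    (w : EuclideanSpace ℝ (Fin m)) : Fin M → EuclideanSpace ℝ (Fin d) :=
  fun j => WithLp.toLp 2 (fun l => ∑ i, A i (j, l) * w i)

/-- The q-ratio block constrained minimal singular value (BCMSV). -/
def bcmsv {m M d : ℕ} (q s : ℝ) (A : Matrix (Fin m) (Fin M × Fin d) ℝ) : ℝ :=
  sInf {t : ℝ | ∃ z : Fin M → EuclideanSpace ℝ (Fin d),
    z ≠ 0 ∧ kqs q z ≤ s ∧ t = ‖mulB A z‖ / norm2q q z}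

end


open Finset in
/-- Hölder: sum of norms over a finset bounded by card^(1-1/q) times Lq norm. -/
lemma holder_card {M d : ℕ} {q : ℝ} (hq : 1 < q) (S : Finset (Fin M))
    (z : Fin M → EuclideanSpace ℝ (Fin d)) :
    ∑ j ∈ S, ‖z j‖ ≤ (S.card : ℝ) ^ (1 - 1 / q) * (∑ j ∈ S, ‖z j‖ ^ q) ^ (1 / q) := by
  have hpq : Real.HolderConjugate (q / (q - 1)) q :=
    (Real.HolderConjugate.conjExponent hq).symm
  have key := Real.inner_le_Lp_mul_Lq_of_nonneg (s := S) (f := fun _ => (1 : ℝ))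
    (g := fun j => ‖z j‖) hpq (fun i _ => zero_le_one) (fun i _ => norm_nonneg _)
  simp only [one_mul, Real.one_rpow] at key
  have h1 : (∑ _j ∈ S, (1 : ℝ)) = (S.card : ℝ) := by simp
  have h2 : 1 / (q / (q - 1)) = 1 - 1 / q := by
    rw [one_div_div]; field_simp
  calc ∑ j ∈ S, ‖z j‖ ≤ (∑ _j ∈ S, (1:ℝ)) ^ (1 / (q/(q-1))) *
        (∑ j ∈ S, ‖z j‖ ^ q) ^ (1/q) := key
    _ = (S.card : ℝ) ^ (1 - 1 / q) * (∑ j ∈ S, ‖z j‖ ^ q) ^ (1 / q) := by rw [h1, h2]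

lemma norm2q_pos' {M d : ℕ} {q : ℝ} (hq : 0 < q) {z : Fin M → EuclideanSpace ℝ (Fin d)}
    (hz : z ≠ 0) : 0 < norm2q q z := by
  obtain ⟨j, hj⟩ : ∃ j, z j ≠ 0 := by
    by_contra hcon
    push_neg at hcon
    exact hz (funext hcon)
  have hterm : 0 < ‖z j‖ ^ q := Real.rpow_pos_of_pos (norm_pos_iff.mpr hj) q
  have hsum : 0 < ∑ j, ‖z j‖ ^ q :=
    lt_of_lt_of_le hterm (Finset.single_le_sum (f := fun j => ‖z j‖ ^ q)
      (fun i _ => Real.rpow_nonneg (norm_nonneg _) q) (Finset.mem_univ j))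
  exact Real.rpow_pos_of_pos hsum _

/-- null space property step: if ‖h‖_{2,1}/‖h‖_{2,q} > 3 k^{1-1/q}, then
the q-ratio objective at x+h strictly exceeds that at x. -/
theorem nsp_ratio_strict_increase {M d k : ℕ} (q : ℝ) (hq : 1 < q)
    (S : Finset (Fin M)) (hS : S.card ≤ k)
    (x h : Fin M → EuclideanSpace ℝ (Fin d)) (hx : x ≠ 0)
    (hxsupp : ∀ j ∉ S, x j = 0) (hh : h ≠ 0)
    (hratio : 3 * (k : ℝ) ^ (1 - 1 / q) < norm21 h / norm2q q h) :
    norm21 x / norm2q q x < norm21 (x + h) / norm2q q (x + h) := by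
  classical
  have hq0 : 0 < q := lt_trans one_pos hq
  have hq1 : (0:ℝ) ≤ 1 - 1/q := by
    have : 1/q < 1 := by
      rw [div_lt_one hq0]; exact hq
    linarith
  set K : ℝ := (k : ℝ) ^ (1 - 1/q) with hKdef
  have hK0 : 0 ≤ K := Real.rpow_nonneg (Nat.cast_nonneg k) _
  have hx2q : 0 < norm2q q x := norm2q_pos' hq0 hx
  have hh2q : 0 < norm2q q h := norm2q_pos' hq0 hh
  -- Hölder for h restricted to S
  have hcard : ((S.card : ℝ)) ^ (1 - 1/q) ≤ K := by
    apply Real.rpow_le_rpow (Nat.cast_nonneg _) (by exact_mod_cast hS) hq1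
  have subsum : ∀ z : Fin M → EuclideanSpace ℝ (Fin d),
      (∑ j ∈ S, ‖z j‖ ^ q) ^ (1/q) ≤ norm2q q z := by
    intro z
    apply Real.rpow_le_rpow (Finset.sum_nonneg fun i _ => Real.rpow_nonneg (norm_nonneg _) _)
      (Finset.sum_le_sum_of_subset_of_nonneg (Finset.subset_univ S)
        (fun i _ _ => Real.rpow_nonneg (norm_nonneg _) _))
      (by positivity)
  have hHS : ∑ j ∈ S, ‖h j‖ ≤ K * norm2q q h := by
    calc ∑ j ∈ S, ‖h j‖ ≤ (S.card : ℝ) ^ (1 - 1/q) * (∑ j ∈ S, ‖h j‖ ^ q) ^ (1/q) :=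
          holder_card hq S h
      _ ≤ K * norm2q q h := by
          apply mul_le_mul hcard (subsum h)
            (Real.rpow_nonneg (Finset.sum_nonneg fun i _ =>
              Real.rpow_nonneg (norm_nonneg _) _) _) hK0
  have hHx : norm21 x ≤ K * norm2q q x := by
    have hx21 : norm21 x = ∑ j ∈ S, ‖x j‖ := by
      rw [norm21]
      refine (Finset.sum_subset (Finset.subset_univ S) ?_).symm
      intro j _ hj
      rw [hxsupp j hj, norm_zero]
    rw [hx21]
    calc ∑ j ∈ S, ‖x j‖ ≤ (S.card : ℝ) ^ (1 - 1/q) * (∑ j ∈ S, ‖x j‖ ^ q) ^ (1/q) :=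
          holder_card hq S x
      _ ≤ K * norm2q q x := by
          apply mul_le_mul hcard (subsum x)
            (Real.rpow_nonneg (Finset.sum_nonneg fun i _ =>
              Real.rpow_nonneg (norm_nonneg _) _) _) hK0
  have hb : 3 * K * norm2q q h < norm21 h := by
    have := (lt_div_iff₀ hh2q).mp hratio
    linarith
  -- x + h ≠ 0
  have hxh : x + h ≠ 0 := by
    intro hc
    have hhx : h = -x := by
      funext j
      have := congrFun hc j
      simp only [Pi.add_apply, Pi.zero_apply] at this
      have : h j = -(x j) := by
        have := eq_neg_of_add_eq_zero_right this
        exact this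
      simpa using this
    have e1 : norm21 h = norm21 x := by
      rw [hhx, norm21, norm21]
      simp
    have e2 : norm2q q h = norm2q q x := by
      rw [hhx, norm2q, norm2q]
      simp
    rw [e1, e2] at hb
    nlinarith [hx2q, hK0]
  have hxh2q : 0 < norm2q q (x + h) := norm2q_pos' hq0 hxh
  -- triangle inequality for norm2q
  have tri : norm2q q (x + h) ≤ norm2q q x + norm2q q h := by
    have step1 : norm2q q (x + h) ≤ (∑ j, (‖x j‖ + ‖h j‖) ^ q) ^ (1/q) := by
      rw [norm2q]
      apply Real.rpow_le_rpow
        (Finset.sum_nonneg fun i _ => Real.rpow_nonneg (norm_nonneg _) _)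
        (Finset.sum_le_sum fun i _ => ?_) (by positivity)
      have : ‖(x + h) i‖ ≤ ‖x i‖ + ‖h i‖ := by
        simpa using norm_add_le (x i) (h i)
      exact Real.rpow_le_rpow (norm_nonneg _) this hq0.le
    have step2 := Real.Lp_add_le_of_nonneg (s := (Finset.univ : Finset (Fin M)))
      (f := fun j => ‖x j‖) (g := fun j => ‖h j‖) hq.le
      (fun i _ => norm_nonneg _) (fun i _ => norm_nonneg _)
    exact le_trans step1 (by rw [norm2q, norm2q]; exact step2)
  -- lower bound on norm21 (x+h)
  have lower : norm21 x + norm21 h - 2 * (∑ j ∈ S, ‖h j‖) ≤ norm21 (x + h) := by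
    have split : ∀ z : Fin M → EuclideanSpace ℝ (Fin d),
        norm21 z = (∑ j ∈ S, ‖z j‖) + ∑ j ∈ Sᶜ, ‖z j‖ := by
      intro z
      rw [norm21, Finset.sum_add_sum_compl]
    have hxc : ∑ j ∈ Sᶜ, ‖x j‖ = 0 := by
      apply Finset.sum_eq_zero
      intro j hj
      rw [hxsupp j (Finset.mem_compl.mp hj), norm_zero]
    have hSxh : ∑ j ∈ S, (‖x j‖ - ‖h j‖) ≤ ∑ j ∈ S, ‖(x + h) j‖ := by
      apply Finset.sum_le_sum
      intro j _
      have : ‖x j‖ - ‖h j‖ ≤ ‖x j + h j‖ := by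
        have := norm_sub_norm_le (x j) (-(h j))
        simpa [sub_neg_eq_add] using this
      simpa using this
    have hCxh : ∑ j ∈ Sᶜ, ‖h j‖ ≤ ∑ j ∈ Sᶜ, ‖(x + h) j‖ := by
      apply Finset.sum_le_sum
      intro j hj
      have : (x + h) j = h j := by
        simp [hxsupp j (Finset.mem_compl.mp hj)]
      rw [this]
    rw [split (x + h), split x, split h, hxc, Finset.sum_sub_distrib] at *
    linarith
  -- conclude
  rw [div_lt_div_iff₀ hx2q hxh2q]
  have hx21nn : 0 ≤ norm21 x := Finset.sum_nonneg fun i _ => norm_nonneg _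
  have e1 : norm21 x * norm2q q (x + h) ≤ norm21 x * norm2q q x + K * norm2q q x * norm2q q h := by
    have := mul_le_mul_of_nonneg_left tri hx21nn
    nlinarith [mul_le_mul_of_nonneg_right hHx hh2q.le]
  have e2 : norm21 x * norm2q q x + K * norm2q q x * norm2q q h < norm21 (x + h) * norm2q q x := by
    have l1 : (norm21 x + norm21 h - 2 * (∑ j ∈ S, ‖h j‖)) * norm2q q x ≤
        norm21 (x + h) * norm2q q x := mul_le_mul_of_nonneg_right lower hx2q.le
    nlinarith [hHS, hb, hx2q]
  linarith
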